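/- Sail coefficients of Markov–Pell polynomials: for every n ≥ 2, (i) for each m with 1 ≤ m ≤ n−1, the coefficient of x^{2m}·y^{2(n+1−m)}·z^{2(n−1)} in R_{2n+1} equals 4m (in particular, for m = 1 the coefficient of x^2·y^{2n}·z^{2(n−1)} equals 4); and (ii) the coefficient of x^2·y^{2(n+1)}·z^{2(n−2)} in R_{2n+1} equals 7n − 10. -/
import Mathlib


open MvPolynomial

/-- The Markov–Pell polynomials `R n ∈ ℤ[x,y,z]` (with `x = X 0`, `y = X 1`, `z = X 2`),
defined by `R 0 = 0`, `R 1 = 1`, and for `k ≥ 1`,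
`R (2k) = (x²+y²)·R (2k-1) + y²z²·R (2k-2)` and
`R (2k+1) = (x²+y²)·R (2k) + x²z²·R (2k-1)`.
(Here `n + 2` is even iff `n` is even, whence the choice of `y` or `x` below.) -/
noncomputable def pellR : ℕ → MvPolynomial (Fin 3) ℤ
  | 0 => 0
  | 1 => 1
  | (n + 2) => (X 0 ^ 2 + X 1 ^ 2) * pellR (n + 1)
      + (if n % 2 = 0 then X 1 else X 0) ^ 2 * X 2 ^ 2 * pellR n

noncomputable def D (a b c : ℕ) : Fin 3 →₀ ℕ :=
  Finsupp.single 0 a + Finsupp.single 1 b + Finsupp.single 2 c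

lemma D_apply0 (a b c : ℕ) : D a b c 0 = a := by
  simp [D, Finsupp.single_apply]
lemma D_apply1 (a b c : ℕ) : D a b c 1 = b := by
  simp [D, Finsupp.single_apply]
lemma D_apply2 (a b c : ℕ) : D a b c 2 = c := by
  simp [D, Finsupp.single_apply]

lemma D_sub0 (a b c k : ℕ) : D a b c - Finsupp.single 0 k = D (a - k) b c := by
  ext j; fin_cases j <;> simp [D, Finsupp.single_apply, Finsupp.tsub_apply]
lemma D_sub1 (a b c k : ℕ) : D a b c - Finsupp.single 1 k = D a (b - k) c := by
  ext j; fin_cases j <;> simp [D, Finsupp.single_apply, Finsupp.tsub_apply]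
lemma D_sub2 (a b c k : ℕ) : D a b c - Finsupp.single 2 k = D a b (c - k) := by
  ext j; fin_cases j <;> simp [D, Finsupp.single_apply, Finsupp.tsub_apply]

lemma D_eq_zero_iff (a b c : ℕ) : D a b c = 0 ↔ a = 0 ∧ b = 0 ∧ c = 0 := by
  constructor
  · intro h
    refine ⟨?_, ?_, ?_⟩
    · rw [← D_apply0 a b c, h]; rfl
    · rw [← D_apply1 a b c, h]; rfl
    · rw [← D_apply2 a b c, h]; rfl
  · rintro ⟨rfl, rfl, rfl⟩
    simp [D]

lemma coeff_Xpow_mul (i : Fin 3) (k : ℕ) (d : Fin 3 →₀ ℕ) (p : MvPolynomial (Fin 3) ℤ) :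
    coeff d (X i ^ k * p) = if k ≤ d i then coeff (d - Finsupp.single i k) p else 0 := by
  rw [X_pow_eq_monomial, coeff_monomial_mul']
  simp [Finsupp.single_le_iff]

lemma pell_even_succ (k : ℕ) : pellR (2*k+2) =
    (X 0 ^ 2 + X 1 ^ 2) * pellR (2*k+1) + X 1 ^ 2 * (X 2 ^ 2 * pellR (2*k)) := by
  have h : (2*k) % 2 = 0 := by omega
  rw [pellR, h]
  simp [mul_assoc]

lemma pell_odd_succ (k : ℕ) : pellR (2*k+3) =
    (X 0 ^ 2 + X 1 ^ 2) * pellR (2*k+2) + X 0 ^ 2 * (X 2 ^ 2 * pellR (2*k+1)) := by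
  have h : (2*k+1) % 2 = 1 := by omega
  rw [show 2*k+3 = (2*k+1)+2 by ring, pellR, h]
  simp [mul_assoc]

lemma coeff_even_step (k a b c : ℕ) :
    coeff (D a b c) (pellR (2*k+2)) =
      (if 2 ≤ a then coeff (D (a-2) b c) (pellR (2*k+1)) else 0)
    + (if 2 ≤ b then coeff (D a (b-2) c) (pellR (2*k+1)) else 0)
    + (if 2 ≤ b then (if 2 ≤ c then coeff (D a (b-2) (c-2)) (pellR (2*k)) else 0) else 0) := by
  rw [pell_even_succ, add_mul, coeff_add, coeff_add]
  simp only [coeff_Xpow_mul, D_apply0, D_apply1, D_apply2, D_sub0, D_sub1, D_sub2]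

lemma coeff_odd_step (k a b c : ℕ) :
    coeff (D a b c) (pellR (2*k+3)) =
      (if 2 ≤ a then coeff (D (a-2) b c) (pellR (2*k+2)) else 0)
    + (if 2 ≤ b then coeff (D a (b-2) c) (pellR (2*k+2)) else 0)
    + (if 2 ≤ a then (if 2 ≤ c then coeff (D (a-2) b (c-2)) (pellR (2*k+1)) else 0) else 0) := by
  rw [pell_odd_succ, add_mul, coeff_add, coeff_add]
  simp only [coeff_Xpow_mul, D_apply0, D_apply1, D_apply2, D_sub0, D_sub1, D_sub2]

noncomputable def fval (n a : ℕ) : ℤ :=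
  if a = 0 then 1 else if a ≤ n - 1 then 4*a else if a = n then 3*(n:ℤ)-1 else n
noncomputable def gval (n a : ℕ) : ℤ := if a = 0 ∨ a = n then 1 else 2

set_option maxHeartbeats 2000000 in
lemma E1_arith (n a b : ℕ) (hn : 1 ≤ n) :
    (if 2 ≤ 2*a then (if a-1 = n ∧ b = 0 then (1:ℤ) else 0) else 0)
    + (if 2 ≤ 2*b then (if a = n ∧ b-1 = 0 then (1:ℤ) else 0) else 0)
    + (if 2 ≤ 2*b then (if a + (b-1) = n then gval n a else 0) else 0)
    = if a + b = n+1 then gval (n+1) a else 0 := by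
  simp only [gval]
  split_ifs <;> omega

set_option maxHeartbeats 2000000 in
lemma O2_arith (n a b : ℕ) (hn : 1 ≤ n) :
    (if 2 ≤ 2*a then (if (a-1) + b = n+1 then gval (n+1) (a-1) else 0) else 0)
    + (if 2 ≤ 2*b then (if a + (b-1) = n+1 then gval (n+1) a else 0) else 0)
    + (if 2 ≤ 2*a then (if (a-1) + b = n+1 then fval n (a-1) else 0) else 0)
    = if a + b = n+2 then fval (n+1) a else 0 := by
  simp only [gval, fval]
  split_ifs <;> omega

lemma coeff_pell_one (d : Fin 3 →₀ ℕ) : coeff d (pellR 1) = if 0 = d then 1 else 0 := by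
  rw [show pellR 1 = 1 from rfl, coeff_one]

lemma coeff_pell_zero (d : Fin 3 →₀ ℕ) : coeff d (pellR 0) = 0 := by
  rw [show pellR 0 = 0 from rfl, coeff_zero]

lemma coeff_pell2 (a b c : ℕ) :
    coeff (D a b c) (pellR 2) =
      (if 2 ≤ a then (if 0 = D (a-2) b c then (1:ℤ) else 0) else 0)
    + (if 2 ≤ b then (if 0 = D a (b-2) c then (1:ℤ) else 0) else 0) := by
  have h := coeff_even_step 0 a b c
  norm_num at h
  rw [h, coeff_pell_one, coeff_pell_one]
  simp [coeff_pell_zero]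

lemma Ze1 (a b c : ℕ) (hc : 1 ≤ c) : coeff (D a b c) (pellR 2) = 0 := by
  rw [coeff_pell2]
  simp only [eq_comm (a := (0 : Fin 3 →₀ ℕ)), D_eq_zero_iff, and_true]
  split_ifs <;> omega

lemma E1_1 (a b : ℕ) :
    coeff (D (2*a) (2*b) 0) (pellR 2) = if a + b = 1 then gval 1 a else 0 := by
  rw [coeff_pell2]
  simp only [eq_comm (a := (0 : Fin 3 →₀ ℕ)), D_eq_zero_iff, and_true, gval]
  split_ifs <;> omega

lemma Zo1 (a b c : ℕ) (hc : 3 ≤ c) : coeff (D a b c) (pellR 3) = 0 := by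
  have h := coeff_odd_step 0 a b c
  norm_num at h
  rw [h, Ze1 _ _ _ (by omega), Ze1 _ _ _ (by omega), coeff_pell_one]
  simp only [eq_comm (a := (0 : Fin 3 →₀ ℕ)), D_eq_zero_iff, and_true]
  split_ifs <;> omega

lemma O1_1 (a b : ℕ) :
    coeff (D (2*a) (2*b) 2) (pellR 3) = if a = 1 ∧ b = 0 then 1 else 0 := by
  have h := coeff_odd_step 0 (2*a) (2*b) 2
  norm_num at h
  rw [h, Ze1 _ _ _ (by omega), Ze1 _ _ _ (by omega), coeff_pell_one]
  simp only [eq_comm (a := (0 : Fin 3 →₀ ℕ)), D_eq_zero_iff, and_true]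
  split_ifs <;> omega

lemma O2_1 (a b : ℕ) :
    coeff (D (2*a) (2*b) 0) (pellR 3) = if a + b = 2 then fval 1 a else 0 := by
  have h := coeff_odd_step 0 (2*a) (2*b) 0
  norm_num at h
  have hx : (if 1 ≤ a then coeff (D (2*a-2) (2*b) 0) (pellR 2) else 0)
      = if 1 ≤ a then (if (a-1) + b = 1 then gval 1 (a-1) else 0) else 0 := by
    by_cases ha : 1 ≤ a
    · rw [if_pos ha, if_pos ha, show 2*a-2 = 2*(a-1) by omega, E1_1]
    · rw [if_neg ha, if_neg ha]
  have hy : (if 1 ≤ b then coeff (D (2*a) (2*b-2) 0) (pellR 2) else 0)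
      = if 1 ≤ b then (if a + (b-1) = 1 then gval 1 a else 0) else 0 := by
    by_cases hb : 1 ≤ b
    · rw [if_pos hb, if_pos hb, show 2*b-2 = 2*(b-1) by omega, E1_1]
    · rw [if_neg hb, if_neg hb]
  rw [hx, hy] at h
  rw [h]
  simp only [gval, fval]
  split_ifs <;> omega

set_option maxHeartbeats 1000000 in
theorem pell_main (n : ℕ) (hn : 1 ≤ n) :
    (∀ a b c, 2*n+1 ≤ c → coeff (D a b c) (pellR (2*n+1)) = 0) ∧
    (∀ a b c, 2*n-1 ≤ c → coeff (D a b c) (pellR (2*n)) = 0) ∧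
    (∀ a b, coeff (D (2*a) (2*b) (2*n)) (pellR (2*n+1)) = if a = n ∧ b = 0 then 1 else 0) ∧
    (∀ a b, coeff (D (2*a) (2*b) (2*n-2)) (pellR (2*n)) = if a + b = n then gval n a else 0) ∧
    (∀ a b, coeff (D (2*a) (2*b) (2*n-2)) (pellR (2*n+1)) = if a + b = n+1 then fval n a else 0) ∧
    (2 ≤ n →
      coeff (D 0 (2*n+2) (2*n-4)) (pellR (2*n)) = (n:ℤ)-1 ∧
      coeff (D 2 (2*n) (2*n-4)) (pellR (2*n)) = 5*(n:ℤ)-7 ∧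
      coeff (D 0 (2*n+4) (2*n-4)) (pellR (2*n+1)) = (n:ℤ)-1 ∧
      coeff (D 2 (2*n+2) (2*n-4)) (pellR (2*n+1)) = 7*(n:ℤ)-10) := by
  induction n, hn using Nat.le_induction with
  | base =>
    refine ⟨fun a b c hc => Zo1 a b c hc, fun a b c hc => Ze1 a b c hc,
      fun a b => O1_1 a b, fun a b => E1_1 a b, fun a b => O2_1 a b,
      fun h => absurd h (by omega)⟩
  | succ n hn ih =>
    obtain ⟨Zo, Ze, O1, E1, O2, S⟩ := ih
    -- Z for even index 2n+2
    have Ze' : ∀ a b c, 2*n+1 ≤ c → coeff (D a b c) (pellR (2*n+2)) = 0 := by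
      intro a b c hc
      rw [coeff_even_step, Zo (a-2) b c (by omega), Zo a (b-2) c (by omega),
        Ze a (b-2) (c-2) (by omega)]
      simp
    -- Z for odd index 2n+3
    have Zo' : ∀ a b c, 2*n+3 ≤ c → coeff (D a b c) (pellR (2*n+3)) = 0 := by
      intro a b c hc
      rw [coeff_odd_step, Ze' (a-2) b c (by omega), Ze' a (b-2) c (by omega),
        Zo (a-2) b (c-2) (by omega)]
      simp
    -- top slice of odd
    have O1' : ∀ a b, coeff (D (2*a) (2*b) (2*n+2)) (pellR (2*n+3))
        = if a = n+1 ∧ b = 0 then 1 else 0 := by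
      intro a b
      rw [coeff_odd_step, Ze' (2*a-2) (2*b) (2*n+2) (by omega),
        Ze' (2*a) (2*b-2) (2*n+2) (by omega)]
      have hx : (if 2 ≤ 2*a then (if 2 ≤ 2*n+2 then
            coeff (D (2*a-2) (2*b) (2*n+2-2)) (pellR (2*n+1)) else 0) else 0)
          = if 2 ≤ 2*a then (if a-1 = n ∧ b = 0 then (1:ℤ) else 0) else 0 := by
        by_cases ha : 2 ≤ 2*a
        · rw [if_pos ha, if_pos ha, if_pos (by omega : (2:ℕ) ≤ 2*n+2),
            show 2*a-2 = 2*(a-1) by omega, show 2*n+2-2 = 2*n by omega, O1]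
        · rw [if_neg ha, if_neg ha]
      rw [hx]
      split_ifs <;> omega
    -- top slice of even
    have E1' : ∀ a b, coeff (D (2*a) (2*b) (2*n)) (pellR (2*n+2))
        = if a + b = n+1 then gval (n+1) a else 0 := by
      intro a b
      rw [coeff_even_step]
      have hx : (if 2 ≤ 2*a then coeff (D (2*a-2) (2*b) (2*n)) (pellR (2*n+1)) else 0)
          = if 2 ≤ 2*a then (if a-1 = n ∧ b = 0 then (1:ℤ) else 0) else 0 := by
        by_cases ha : 2 ≤ 2*a
        · rw [if_pos ha, if_pos ha, show 2*a-2 = 2*(a-1) by omega, O1]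
        · rw [if_neg ha, if_neg ha]
      have hy : (if 2 ≤ 2*b then coeff (D (2*a) (2*b-2) (2*n)) (pellR (2*n+1)) else 0)
          = if 2 ≤ 2*b then (if a = n ∧ b-1 = 0 then (1:ℤ) else 0) else 0 := by
        by_cases hb : 2 ≤ 2*b
        · rw [if_pos hb, if_pos hb, show 2*b-2 = 2*(b-1) by omega, O1]
        · rw [if_neg hb, if_neg hb]
      have hz : (if 2 ≤ 2*b then (if 2 ≤ 2*n then
            coeff (D (2*a) (2*b-2) (2*n-2)) (pellR (2*n)) else 0) else 0)
          = if 2 ≤ 2*b then (if a + (b-1) = n then gval n a else 0) else 0 := by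
        by_cases hb : 2 ≤ 2*b
        · rw [if_pos hb, if_pos hb, if_pos (by omega : (2:ℕ) ≤ 2*n),
            show 2*b-2 = 2*(b-1) by omega, E1]
        · rw [if_neg hb, if_neg hb]
      rw [hx, hy, hz]
      exact E1_arith n a b hn
    -- second slice of odd
    have O2' : ∀ a b, coeff (D (2*a) (2*b) (2*n)) (pellR (2*n+3))
        = if a + b = n+2 then fval (n+1) a else 0 := by
      intro a b
      rw [coeff_odd_step]
      have hx : (if 2 ≤ 2*a then coeff (D (2*a-2) (2*b) (2*n)) (pellR (2*n+2)) else 0)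
          = if 2 ≤ 2*a then (if (a-1) + b = n+1 then gval (n+1) (a-1) else 0) else 0 := by
        by_cases ha : 2 ≤ 2*a
        · rw [if_pos ha, if_pos ha, show 2*a-2 = 2*(a-1) by omega, E1']
        · rw [if_neg ha, if_neg ha]
      have hy : (if 2 ≤ 2*b then coeff (D (2*a) (2*b-2) (2*n)) (pellR (2*n+2)) else 0)
          = if 2 ≤ 2*b then (if a + (b-1) = n+1 then gval (n+1) a else 0) else 0 := by
        by_cases hb : 2 ≤ 2*b
        · rw [if_pos hb, if_pos hb, show 2*b-2 = 2*(b-1) by omega, E1']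
        · rw [if_neg hb, if_neg hb]
      have hz : (if 2 ≤ 2*a then (if 2 ≤ 2*n then
            coeff (D (2*a-2) (2*b) (2*n-2)) (pellR (2*n+1)) else 0) else 0)
          = if 2 ≤ 2*a then (if (a-1) + b = n+1 then fval n (a-1) else 0) else 0 := by
        by_cases ha : 2 ≤ 2*a
        · rw [if_pos ha, if_pos ha, if_pos (by omega : (2:ℕ) ≤ 2*n),
            show 2*a-2 = 2*(a-1) by omega, O2]
        · rw [if_neg ha, if_neg ha]
      rw [hx, hy, hz]
      exact O2_arith n a b hn
    -- sail slices at n+1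
    have E2a' : coeff (D 0 (2*n+4) (2*n-2)) (pellR (2*n+2)) = (n:ℤ) := by
      rw [coeff_even_step]
      have t2 : coeff (D 0 (2*n+4-2) (2*n-2)) (pellR (2*n+1)) = fval n 0 := by
        have h := O2 0 (n+1)
        rw [if_pos (by omega)] at h
        exact h
      rw [t2]
      by_cases h2 : 2 ≤ n
      · obtain ⟨hA, hB, hC, hD⟩ := S h2
        have t3 : coeff (D 0 (2*n+4-2) (2*n-2-2)) (pellR (2*n)) = (n:ℤ)-1 := hA
        rw [t3, if_neg (by omega : ¬ (2:ℕ) ≤ 0), if_pos (by omega : (2:ℕ) ≤ 2*n+4),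
          if_pos (by omega : (2:ℕ) ≤ 2*n+4), if_pos (by omega : (2:ℕ) ≤ 2*n-2)]
        simp [fval]
      · have n1 : n = 1 := by omega
        subst n1
        norm_num [fval]
    have E2b' : coeff (D 2 (2*n+2) (2*n-2)) (pellR (2*n+2)) = 5*(n:ℤ)-2 := by
      rw [coeff_even_step]
      have t1 : coeff (D (2-2) (2*n+2) (2*n-2)) (pellR (2*n+1)) = fval n 0 := by
        have h := O2 0 (n+1)
        rw [if_pos (by omega)] at h
        exact h
      have t2 : coeff (D 2 (2*n+2-2) (2*n-2)) (pellR (2*n+1)) = fval n 1 := by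
        have h := O2 1 n
        rw [if_pos (by omega)] at h
        exact h
      rw [t1, t2]
      by_cases h2 : 2 ≤ n
      · obtain ⟨hA, hB, hC, hD⟩ := S h2
        have t3 : coeff (D 2 (2*n+2-2) (2*n-2-2)) (pellR (2*n)) = 5*(n:ℤ)-7 := hB
        rw [t3, if_pos (by omega : (2:ℕ) ≤ 2), if_pos (by omega : (2:ℕ) ≤ 2*n+2),
          if_pos (by omega : (2:ℕ) ≤ 2*n+2), if_pos (by omega : (2:ℕ) ≤ 2*n-2)]
        have f0 : fval n 0 = 1 := by simp [fval]
        have f1 : fval n 1 = 4 := by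
          simp only [fval]
          rw [if_neg (by omega), if_pos (by omega)]
          norm_num
        rw [f0, f1]; push_cast; ring
      · have n1 : n = 1 := by omega
        subst n1
        norm_num [fval]
    have O3a' : coeff (D 0 (2*n+6) (2*n-2)) (pellR (2*n+3)) = (n:ℤ) := by
      rw [coeff_odd_step]
      have t2 : coeff (D 0 (2*n+6-2) (2*n-2)) (pellR (2*n+2)) = (n:ℤ) := E2a'
      rw [t2, if_neg (by omega : ¬ (2:ℕ) ≤ 0), if_pos (by omega : (2:ℕ) ≤ 2*n+6)]
      norm_num
    have O3b' : coeff (D 2 (2*n+4) (2*n-2)) (pellR (2*n+3)) = 7*(n:ℤ)-3 := by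
      rw [coeff_odd_step]
      have t1 : coeff (D (2-2) (2*n+4) (2*n-2)) (pellR (2*n+2)) = (n:ℤ) := E2a'
      have t2 : coeff (D 2 (2*n+4-2) (2*n-2)) (pellR (2*n+2)) = 5*(n:ℤ)-2 := E2b'
      rw [t1, t2]
      by_cases h2 : 2 ≤ n
      · obtain ⟨hA, hB, hC, hD⟩ := S h2
        have t3 : coeff (D (2-2) (2*n+4) (2*n-2-2)) (pellR (2*n+1)) = (n:ℤ)-1 := hC
        rw [t3, if_pos (by omega : (2:ℕ) ≤ 2), if_pos (by omega : (2:ℕ) ≤ 2*n+4),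
          if_pos (by omega : (2:ℕ) ≤ 2*n-2), if_pos (by omega : (2:ℕ) ≤ 2)]
        ring
      · have n1 : n = 1 := by omega
        subst n1
        have t3 : coeff (D (2-2) (2*1+4) (2*1-2-2)) (pellR (2*1+1)) = 0 → True := fun _ => trivial
        norm_num
    exact ⟨Zo', Ze', O1', E1', O2',
      fun _ => ⟨E2a'.trans (by push_cast; ring), E2b'.trans (by push_cast; ring),
        O3a'.trans (by push_cast; ring), O3b'.trans (by push_cast; ring)⟩⟩

/-- Sail coefficients of Markov–Pell polynomials: for `n ≥ 2`, the coefficient of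
`x^(2m)·y^(2(n+1-m))·z^(2(n-1))` in `R (2n+1)` equals `4m` for `1 ≤ m ≤ n-1`
(in particular it equals `4` for `m = 1`), and the coefficient of
`x²·y^(2(n+1))·z^(2(n-2))` in `R (2n+1)` equals `7n - 10`. -/
theorem pell_sail_coefficients (n : ℕ) (hn : 2 ≤ n) :
    (∀ m : ℕ, 1 ≤ m → m ≤ n - 1 →
      MvPolynomial.coeff
          (Finsupp.single 0 (2 * m) + Finsupp.single 1 (2 * (n + 1 - m)) +
            Finsupp.single 2 (2 * (n - 1)))
          (pellR (2 * n + 1)) = 4 * (m : ℤ)) ∧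
    MvPolynomial.coeff
        (Finsupp.single 0 2 + Finsupp.single 1 (2 * (n + 1)) +
          Finsupp.single 2 (2 * (n - 2)))
        (pellR (2 * n + 1)) = 7 * (n : ℤ) - 10 := by
  obtain ⟨Zo, Ze, O1, E1, O2, S⟩ := pell_main n (by omega)
  obtain ⟨hA, hB, hC, hD⟩ := S hn
  constructor
  · intro m hm1 hm2
    have h := O2 m (n+1-m)
    rw [if_pos (by omega)] at h
    have h2 : coeff (D (2*m) (2*(n+1-m)) (2*(n-1))) (pellR (2*n+1)) = fval n m := by
      rw [show 2*(n-1) = 2*n-2 by omega]; exact h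
    rw [show (Finsupp.single 0 (2*m) + Finsupp.single 1 (2*(n+1-m)) +
        Finsupp.single 2 (2*(n-1)) : Fin 3 →₀ ℕ) = D (2*m) (2*(n+1-m)) (2*(n-1)) from rfl, h2]
    simp only [fval]
    rw [if_neg (by omega), if_pos (by omega)]
  · rw [show (Finsupp.single 0 2 + Finsupp.single 1 (2*(n+1)) +
        Finsupp.single 2 (2*(n-2)) : Fin 3 →₀ ℕ) = D 2 (2*(n+1)) (2*(n-2)) from rfl,
      show 2*(n-2) = 2*n-4 by omega]
    exact hD
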